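/- Let Ω, Ω' ⊆ ℝ² be open sets, let f : Ω → ℝ³ be continuously differentiable with ∂₁f(x) × ∂₂f(x) ≠ 0 for all x ∈ Ω, and let φ : Ω' → Ω be continuously differentiable with det(Dφ(x)) > 0 for all x ∈ Ω'. Then the square root normal field of the reparametrized surface satisfies ñ_{f∘φ}(x) = √(det Dφ(x)) · ñ_f(φ(x)) for all x ∈ Ω'. -/

import Mathlib

open Set MeasureTheory

noncomputable section

/-- The cross product on `ℝ³`. -/
def cross (u v : EuclideanSpace ℝ (Fin 3)) : EuclideanSpace ℝ (Fin 3) :=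
  WithLp.toLp 2 ![u 1 * v 2 - u 2 * v 1, u 2 * v 0 - u 0 * v 2, u 0 * v 1 - u 1 * v 0]

/-- The partial derivative `∂ᵢ f` of a surface patch `f : ℝ² → ℝ³` in the `i`-th
standard coordinate direction. -/
def pderiv' (i : Fin 2) (f : EuclideanSpace ℝ (Fin 2) → EuclideanSpace ℝ (Fin 3))
    (x : EuclideanSpace ℝ (Fin 2)) : EuclideanSpace ℝ (Fin 3) :=
  fderiv ℝ f x (EuclideanSpace.single i 1)

/-- The square root normal field (SRNF) of a surface patch:
`ñ_f x = (∂₁f x × ∂₂f x) / ‖∂₁f x × ∂₂f x‖ ^ (1/2)`. -/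
def srnfS (f : EuclideanSpace ℝ (Fin 2) → EuclideanSpace ℝ (Fin 3))
    (x : EuclideanSpace ℝ (Fin 2)) : EuclideanSpace ℝ (Fin 3) :=
  (Real.sqrt ‖cross (pderiv' 0 f x) (pderiv' 1 f x)‖)⁻¹ •
    cross (pderiv' 0 f x) (pderiv' 1 f x)

lemma cross_combo (a b c d : ℝ) (u v : EuclideanSpace ℝ (Fin 3)) :
    cross (a • u + b • v) (c • u + d • v) = (a * d - b * c) • cross u v := by
  ext i
  fin_cases i <;>
    simp [cross, PiLp.add_apply, PiLp.smul_apply, smul_eq_mul] <;> ring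

lemma euclid_decomp (v : EuclideanSpace ℝ (Fin 2)) :
    v = v 0 • EuclideanSpace.single (0 : Fin 2) (1:ℝ)
      + v 1 • EuclideanSpace.single (1 : Fin 2) (1:ℝ) := by
  ext i
  fin_cases i <;>
    simp [EuclideanSpace.single_apply, PiLp.add_apply, PiLp.smul_apply]

lemma clm_det_fin_two (A : EuclideanSpace ℝ (Fin 2) →L[ℝ] EuclideanSpace ℝ (Fin 2)) :
    A.det = (A (EuclideanSpace.single 0 1)) 0 * (A (EuclideanSpace.single 1 1)) 1
      - (A (EuclideanSpace.single 0 1)) 1 * (A (EuclideanSpace.single 1 1)) 0 := by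
  have h := LinearMap.det_toMatrix ((EuclideanSpace.basisFun (Fin 2) ℝ).toBasis)
    (A : EuclideanSpace ℝ (Fin 2) →ₗ[ℝ] EuclideanSpace ℝ (Fin 2))
  rw [ContinuousLinearMap.det, ← h, Matrix.det_fin_two]
  simp [LinearMap.toMatrix_apply, EuclideanSpace.basisFun_apply]
  ring

/-- The SRNF of a reparametrized surface satisfies
`ñ_{f∘φ}(x) = √(det Dφ(x)) • ñ_f(φ(x))`. -/
theorem srnfS_reparametrization
    (Ω Ω' : Set (EuclideanSpace ℝ (Fin 2)))
    (hΩ : IsOpen Ω) (hΩ' : IsOpen Ω')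
    (f : EuclideanSpace ℝ (Fin 2) → EuclideanSpace ℝ (Fin 3))
    (φ : EuclideanSpace ℝ (Fin 2) → EuclideanSpace ℝ (Fin 2))
    (hf : ContDiffOn ℝ 1 f Ω)
    (hf' : ∀ x ∈ Ω, cross (pderiv' 0 f x) (pderiv' 1 f x) ≠ 0)
    (hφ : ContDiffOn ℝ 1 φ Ω') (hφmaps : MapsTo φ Ω' Ω)
    (hφdet : ∀ x ∈ Ω', 0 < (fderiv ℝ φ x).det) :
    ∀ x ∈ Ω',
      srnfS (f ∘ φ) x = Real.sqrt ((fderiv ℝ φ x).det) • srnfS f (φ x) := by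
  intro x hx
  have hxΩ := hφmaps hx
  have hdf : DifferentiableAt ℝ f (φ x) :=
    (hf.differentiableOn one_ne_zero).differentiableAt (hΩ.mem_nhds hxΩ)
  have hdφ : DifferentiableAt ℝ φ x :=
    (hφ.differentiableOn one_ne_zero).differentiableAt (hΩ'.mem_nhds hx)
  have hcomp : fderiv ℝ (f ∘ φ) x = (fderiv ℝ f (φ x)).comp (fderiv ℝ φ x) :=
    fderiv_comp x hdf hdφ
  set A := fderiv ℝ φ x with hA
  set D := fderiv ℝ f (φ x) with hD
  set s0 : EuclideanSpace ℝ (Fin 2) := EuclideanSpace.single 0 1 with hs0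
  set s1 : EuclideanSpace ℝ (Fin 2) := EuclideanSpace.single 1 1 with hs1
  set a : ℝ := (A s0) 0
  set b : ℝ := (A s0) 1
  set c : ℝ := (A s1) 0
  set d : ℝ := (A s1) 1
  have hdet : A.det = a * d - b * c := clm_det_fin_two A
  have hp0 : pderiv' 0 (f ∘ φ) x = a • pderiv' 0 f (φ x) + b • pderiv' 1 f (φ x) := by
    rw [pderiv', hcomp]
    show D (A s0) = a • D s0 + b • D s1
    rw [euclid_decomp (A s0)]
    simp only [map_add, ContinuousLinearMap.map_smul]
    rfl
  have hp1 : pderiv' 1 (f ∘ φ) x = c • pderiv' 0 f (φ x) + d • pderiv' 1 f (φ x) := by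
    rw [pderiv', hcomp]
    show D (A s1) = c • D s0 + d • D s1
    rw [euclid_decomp (A s1)]
    simp only [map_add, ContinuousLinearMap.map_smul]
    rfl
  set C := cross (pderiv' 0 f (φ x)) (pderiv' 1 f (φ x)) with hC
  have hcross : cross (pderiv' 0 (f ∘ φ) x) (pderiv' 1 (f ∘ φ) x) = A.det • C := by
    rw [hp0, hp1, cross_combo, hdet]
  have ht : 0 < A.det := hφdet x hx
  have hCne : C ≠ 0 := hf' (φ x) hxΩ
  have hCnorm : (0:ℝ) < ‖C‖ := norm_pos_iff.mpr hCne
  rw [srnfS, hcross, srnfS]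
  rw [norm_smul, Real.norm_eq_abs, abs_of_pos ht, Real.sqrt_mul ht.le]
  rw [smul_smul, smul_smul, ← hC]
  congr 1
  have h1 : Real.sqrt A.det ≠ 0 := Real.sqrt_ne_zero'.mpr ht
  have h2 : Real.sqrt ‖C‖ ≠ 0 := Real.sqrt_ne_zero'.mpr hCnorm
  have h3 : Real.sqrt A.det * Real.sqrt A.det = A.det := Real.mul_self_sqrt ht.le
  field_simp
  linear_combination (-1) * h3
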